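/- Let G be a connected finite simple graph with more than 2 vertices which is 1-well-covered, and let α = α(G). Then s_0 ≤ s_1 ≤ ⋯ ≤ s_{⌈2α/3⌉}; that is, s_k ≤ s_{k+1} for every k with 0 ≤ k < ⌈2α/3⌉. -/

import Mathlib

open Finset
open scoped Classical

variable {V : Type*}

/-- `S` is an independent set in `G`: its vertices are pairwise non-adjacent. -/
def IsIndepSet (G : SimpleGraph V) (S : Finset V) : Prop :=
  ∀ ⦃u⦄, u ∈ S → ∀ ⦃v⦄, v ∈ S → ¬ G.Adj u v

/-- The neighborhood `N(S)`: all vertices having at least one neighbor in `S`. -/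
noncomputable def neigh [Fintype V] (G : SimpleGraph V) (S : Finset V) : Finset V :=
  Finset.univ.filter fun v => ∃ u ∈ S, G.Adj u v

/-- The independence number `α(G)`: the maximum size of an independent set. -/
noncomputable def indepNum [Fintype V] (G : SimpleGraph V) : ℕ :=
  (Finset.univ.filter fun S : Finset V => IsIndepSet G S).sup Finset.card

/-- `s_k`: the number of independent sets of size `k` in `G`. -/
noncomputable def indepCount [Fintype V] (G : SimpleGraph V) (k : ℕ) : ℕ :=
  (Finset.univ.filter fun S : Finset V => IsIndepSet G S ∧ S.card = k).card

/-- A maximal independent set (not properly contained in another independent set). -/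
def IsMaximalIndepSet (G : SimpleGraph V) (S : Finset V) : Prop :=
  IsIndepSet G S ∧ ∀ T : Finset V, IsIndepSet G T → S ⊆ T → S = T

/-- `G` is well-covered: all maximal independent sets have the same cardinality. -/
def IsWellCovered (G : SimpleGraph V) : Prop :=
  ∀ S T : Finset V, IsMaximalIndepSet G S → IsMaximalIndepSet G T → S.card = T.card

/-- `G` is 1-well-covered: it is well-covered, has at least two vertices, and
deleting any vertex leaves a well-covered graph. -/
def IsOneWellCovered [Fintype V] (G : SimpleGraph V) : Prop :=
  IsWellCovered G ∧ 2 ≤ Fintype.card V ∧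
    ∀ v : V, IsWellCovered (G.induce ({v}ᶜ : Set V))

/-- The corona `H ∘ K₂`: for each vertex `v` of `H`, two new vertices
(`(v, false)` and `(v, true)`) adjacent to each other and to `v` are added. -/
def corona2 (H : SimpleGraph V) : SimpleGraph (V ⊕ V × Bool) :=
  SimpleGraph.fromRel fun x y =>
    match x, y with
    | Sum.inl u, Sum.inl v => H.Adj u v
    | Sum.inl u, Sum.inr (v, _) => u = v
    | Sum.inr (u, _), Sum.inr (v, _) => u = v
    | _, _ => False

/-!
Call a vertex outside `S ∪ N(S)` an extension vertex of the independent set `S`. If `v` is an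
extension vertex none of whose neighbours is one, then a maximal independent set of `G - v`
containing `S` stays independent after adding `v`, so it is smaller than `α(G)`, whereas a maximal
independent set of `G` through a neighbour of `v` is one of `G - v` of size `α(G)`: this
contradicts well-coveredness of `G - v`. Hence extension vertices come in adjacent pairs, and
inductively an independent `k`-set has at least `2(α - k)` extension vertices. Double counting
the pairs `S ⊂ T` of independent sets of sizes `k` and `k + 1` gives
`2(α - k) s_k ≤ (k + 1) s_{k+1}`, and `k + 1 ≤ 2(α - k)` exactly when `k < ⌈2α/3⌉`.
-/

section IndepSet

variable {G : SimpleGraph V}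

lemma isIndepSet_insert_iff {S : Finset V} {v : V} :
    IsIndepSet G (insert v S) ↔ IsIndepSet G S ∧ ∀ u ∈ S, ¬ G.Adj v u := by
  refine ⟨fun h => ⟨fun a ha b hb => h (mem_insert_of_mem ha) (mem_insert_of_mem hb),
    fun u hu => h (mem_insert_self v S) (mem_insert_of_mem hu)⟩, fun ⟨hS, hv⟩ => ?_⟩
  intro a ha b hb
  rw [mem_insert] at ha hb
  rcases ha with rfl | ha <;> rcases hb with rfl | hb
  · exact G.loopless.irrefl _
  · exact hv _ hb
  · exact fun hab => hv _ ha hab.symm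
  · exact hS ha hb

lemma isMaximalIndepSet_iff_maximal {S : Finset V} :
    IsMaximalIndepSet G S ↔ Maximal (IsIndepSet G) S :=
  ⟨fun h => ⟨h.1, fun _ hT hST => (h.2 _ hT hST).ge⟩,
    fun h => ⟨h.1, fun _ hT hST => h.eq_of_le hT hST⟩⟩

lemma isMaximalIndepSet_induce_subtype {s : Set V} {M : Finset V}
    (hM : Maximal (fun T : Finset V => IsIndepSet G T ∧ ↑T ⊆ s) M) :
    IsMaximalIndepSet (G.induce s) (M.subtype (· ∈ s)) := by
  refine ⟨fun a ha b hb => hM.prop.1 (mem_subtype.1 ha) (mem_subtype.1 hb), fun T' hT' hMT' => ?_⟩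
  set T := T'.map (Function.Embedding.subtype _)
  have hT : IsIndepSet G T ∧ ↑T ⊆ s := by
    refine ⟨fun a ha b hb => ?_, map_subtype_subset T'⟩
    obtain ⟨a', ha', rfl⟩ := mem_map.1 ha
    obtain ⟨b', hb', rfl⟩ := mem_map.1 hb
    exact hT' ha' hb'
  have hMT : M ⊆ T := fun x hx =>
    mem_map_of_mem _ (hMT' (mem_subtype.2 hx : (⟨x, hM.prop.2 hx⟩ : s) ∈ M.subtype (· ∈ s)))
  apply map_injective (Function.Embedding.subtype (· ∈ s))
  rw [subtype_map_of_mem hM.prop.2]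
  exact hM.eq_of_le hT hMT

lemma IsWellCovered.card_eq_of_maximal_subset {s : Set V} (hs : IsWellCovered (G.induce s))
    {M₁ M₂ : Finset V} (h₁ : Maximal (fun T : Finset V => IsIndepSet G T ∧ ↑T ⊆ s) M₁)
    (h₂ : Maximal (fun T : Finset V => IsIndepSet G T ∧ ↑T ⊆ s) M₂) : M₁.card = M₂.card := by
  have := hs _ _ (isMaximalIndepSet_induce_subtype h₁) (isMaximalIndepSet_induce_subtype h₂)
  rwa [card_subtype, card_subtype, filter_true_of_mem h₁.prop.2,
    filter_true_of_mem h₂.prop.2] at this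

variable [Fintype V]

lemma card_le_indepNum {S : Finset V} (hS : IsIndepSet G S) : S.card ≤ indepNum G :=
  le_sup (f := Finset.card) (by simp [hS])

lemma IsWellCovered.card_eq_indepNum (hG : IsWellCovered G) {M : Finset V}
    (hM : Maximal (IsIndepSet G) M) : M.card = indepNum G := by
  obtain ⟨B, hB, hBcard⟩ := exists_mem_eq_sup (univ.filter fun S => IsIndepSet G S)
    ⟨∅, mem_filter.2 ⟨mem_univ _, fun _ h => absurd h (notMem_empty _)⟩⟩ Finset.card
  obtain ⟨M', hBM', hM'⟩ := Finite.exists_le_maximal (mem_filter.1 hB).2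
  have hcard : M'.card = M.card :=
    hG _ _ (isMaximalIndepSet_iff_maximal.2 hM') (isMaximalIndepSet_iff_maximal.2 hM)
  refine le_antisymm (card_le_indepNum hM.prop) ?_
  calc indepNum G = B.card := hBcard
    _ ≤ M'.card := card_le_card hBM'
    _ = M.card := hcard

end IndepSet

section Extension

variable [Fintype V] {G : SimpleGraph V}

noncomputable def extSet (G : SimpleGraph V) (S : Finset V) : Finset V :=
  (S ∪ neigh G S)ᶜ

lemma mem_extSet {S : Finset V} {v : V} :
    v ∈ extSet G S ↔ v ∉ S ∧ ∀ u ∈ S, ¬ G.Adj u v := by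
  simp [extSet, neigh]

lemma IsIndepSet.insert_of_mem_extSet {S : Finset V} {v : V} (hS : IsIndepSet G S)
    (hv : v ∈ extSet G S) : IsIndepSet G (insert v S) :=
  isIndepSet_insert_iff.2 ⟨hS, fun u hu huv => (mem_extSet.1 hv).2 u hu huv.symm⟩

lemma extSet_insert_subset {S : Finset V} {v w : V} (hvw : G.Adj v w) :
    extSet G (insert v S) ⊆ ((extSet G S).erase v).erase w := by
  intro x hx
  obtain ⟨hxS, hxadj⟩ := mem_extSet.1 hx
  refine mem_erase.2 ⟨?_, mem_erase.2 ⟨?_, mem_extSet.2 ⟨?_, ?_⟩⟩⟩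
  · rintro rfl
    exact hxadj v (mem_insert_self v S) hvw
  · rintro rfl
    exact hxS (mem_insert_self x S)
  · exact fun h => hxS (mem_insert_of_mem h)
  · exact fun u hu => hxadj u (mem_insert_of_mem hu)

lemma exists_adj_mem_extSet (hG : IsWellCovered G) {v u : V}
    (hGv : IsWellCovered (G.induce ({v}ᶜ : Set V))) (hvu : G.Adj v u) {S : Finset V}
    (hS : IsIndepSet G S) (hv : v ∈ extSet G S) : ∃ w ∈ extSet G S, G.Adj v w := by
  by_contra! hnone
  have hvS := (mem_extSet.1 hv).1
  have hdominated : ∀ w, G.Adj v w → ∃ x ∈ S, G.Adj x w := by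
    intro w hvw
    by_contra! hw
    exact hnone w (mem_extSet.2 ⟨fun hwS => (mem_extSet.1 hv).2 w hwS hvw.symm, hw⟩) hvw
  have havoid : ∀ T : Finset V, (↑T ⊆ ({v}ᶜ : Set V)) ↔ v ∉ T := fun T =>
    Set.subset_compl_singleton_iff.trans (by simp)
  obtain ⟨M₁, hSM₁, hM₁⟩ := Finite.exists_le_maximal
    (p := fun T : Finset V => IsIndepSet G T ∧ ↑T ⊆ ({v}ᶜ : Set V)) ⟨hS, (havoid S).2 hvS⟩
  have hins : IsIndepSet G (insert v M₁) := by
    refine isIndepSet_insert_iff.2 ⟨hM₁.prop.1, fun w hw hvw => ?_⟩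
    obtain ⟨x, hx, hxw⟩ := hdominated w hvw
    exact hM₁.prop.1 (hSM₁ hx) hw hxw
  have hM₁card : M₁.card + 1 ≤ indepNum G := by
    simpa [card_insert_of_notMem ((havoid M₁).1 hM₁.prop.2)] using card_le_indepNum hins
  obtain ⟨M₂, huM₂, hM₂⟩ := Finite.exists_le_maximal (p := IsIndepSet G)
    (a := {u}) fun a ha b hb => by
      rw [mem_singleton.1 ha, mem_singleton.1 hb]
      exact G.loopless.irrefl u
  have hvM₂ : v ∉ M₂ := fun hv => hM₂.prop hv (huM₂ (mem_singleton_self u)) hvu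
  have hM₂' : Maximal (fun T : Finset V => IsIndepSet G T ∧ ↑T ⊆ ({v}ᶜ : Set V)) M₂ :=
    hM₂.mono (fun _ => And.left) ⟨hM₂.prop, (havoid M₂).2 hvM₂⟩
  have := hGv.card_eq_of_maximal_subset hM₁ hM₂'
  have := hG.card_eq_indepNum hM₂
  omega

lemma two_mul_sub_card_le_card_extSet (hG : IsWellCovered G)
    (hdel : ∀ v, IsWellCovered (G.induce ({v}ᶜ : Set V))) (hnonisolated : ∀ v, ∃ u, G.Adj v u)
    {S : Finset V} (hS : IsIndepSet G S) : 2 * (indepNum G - S.card) ≤ (extSet G S).card := by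
  induction hn : indepNum G - S.card generalizing S with
  | zero => exact Nat.zero_le _
  | succ n ih =>
    obtain ⟨M, hSM, hM⟩ := Finite.exists_le_maximal hS
    obtain ⟨v, hvM, hvS⟩ := exists_mem_notMem_of_card_lt_card
      (s := S) (t := M) (by rw [hG.card_eq_indepNum hM]; omega)
    have hv : v ∈ extSet G S := mem_extSet.2 ⟨hvS, fun u hu huv => hM.prop (hSM hu) hvM huv⟩
    obtain ⟨u, hvu⟩ := hnonisolated v
    obtain ⟨w, hw, hvw⟩ := exists_adj_mem_extSet hG (hdel v) hvu hS hv
    have hind := ih (hS.insert_of_mem_extSet hv) (by rw [card_insert_of_notMem hvS]; omega)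
    have hsub := card_le_card (extSet_insert_subset (S := S) hvw)
    have herase_w := card_erase_add_one (mem_erase.2 ⟨(G.ne_of_adj hvw).symm, hw⟩)
    have herase_v := card_erase_add_one hv
    omega

end Extension

lemma card_bipartiteBelow_subset_le {α : Type*} {𝒜 : Finset (Finset α)} {k : ℕ}
    (h𝒜 : ∀ S ∈ 𝒜, S.card = k) {T : Finset α} (hT : T.card = k + 1) :
    (𝒜.bipartiteBelow (· ⊆ ·) T).card ≤ k + 1 :=
  calc (𝒜.bipartiteBelow (· ⊆ ·) T).card ≤ (T.powersetCard k).card :=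
        card_le_card fun S hS =>
          have ⟨hS𝒜, hST⟩ := (mem_bipartiteBelow _).1 hS
          mem_powersetCard.2 ⟨hST, h𝒜 S hS𝒜⟩
    _ = k + 1 := by rw [card_powersetCard, hT, Nat.choose_succ_self_right]

section DoubleCounting

variable [Fintype V] {G : SimpleGraph V}

noncomputable def indepSetsOfCard (G : SimpleGraph V) (k : ℕ) : Finset (Finset V) :=
  univ.filter fun S => IsIndepSet G S ∧ S.card = k

lemma card_extSet_le_card_bipartiteAbove {S : Finset V} (hS : IsIndepSet G S) :
    (extSet G S).card ≤ ((indepSetsOfCard G (S.card + 1)).bipartiteAbove (· ⊆ ·) S).card := by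
  refine card_le_card_of_injOn (fun v => insert v S) (fun v hv => ?_) (fun v hv w _ hvw => ?_)
  · have hvS := (mem_extSet.1 hv).1
    exact (mem_bipartiteAbove _).2 ⟨mem_filter.2 ⟨mem_univ _, hS.insert_of_mem_extSet hv,
      card_insert_of_notMem hvS⟩, subset_insert v S⟩
  · have hv' : v ∈ insert w S := by
      rw [← show insert v S = insert w S from hvw]
      exact mem_insert_self v S
    exact (mem_insert.1 hv').resolve_right (mem_extSet.1 hv).1

lemma indepCount_mul_le {k m : ℕ}
    (hext : ∀ S, IsIndepSet G S → S.card = k → m ≤ (extSet G S).card) :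
    indepCount G k * m ≤ indepCount G (k + 1) * (k + 1) :=
  card_mul_le_card_mul (s := indepSetsOfCard G k) (t := indepSetsOfCard G (k + 1)) (· ⊆ ·)
    (fun S hS => by
      obtain ⟨-, hSind, rfl⟩ := mem_filter.1 hS
      exact (hext S hSind rfl).trans (card_extSet_le_card_bipartiteAbove hSind))
    (fun T hT => card_bipartiteBelow_subset_le (fun S hS => (mem_filter.1 hS).2.2)
      (mem_filter.1 hT).2.2)

end DoubleCounting

theorem stmt_8_general {V : Type*} [Fintype V] (G : SimpleGraph V)
    (hconn : G.Connected) (h1wc : IsOneWellCovered G)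
    (alpha : ℕ) (ha : alpha = indepNum G) :
    ∀ k : ℕ, k < (2 * alpha + 2) / 3 → indepCount G k ≤ indepCount G (k + 1) := by
  intro k hk
  obtain ⟨hwc, hcard, hdel⟩ := h1wc
  have : Nontrivial V := Fintype.one_lt_card_iff_nontrivial.1 hcard
  have hmul : indepCount G k * (2 * (alpha - k)) ≤ indepCount G (k + 1) * (k + 1) :=
    indepCount_mul_le fun S hS hSk => ha ▸ hSk ▸
      two_mul_sub_card_le_card_extSet hwc hdel hconn.preconnected.exists_adj_of_nontrivial hS
  have hk' : k + 1 ≤ 2 * (alpha - k) := by omega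
  exact Nat.le_of_mul_le_mul_right (hmul.trans (Nat.mul_le_mul_left _ hk')) (by omega)

/-- If `G` is a connected `1`-well-covered graph with more than two
vertices and `α = α(G)`, then `s_0 ≤ s_1 ≤ ⋯ ≤ s_{⌈2α/3⌉}`. -/
theorem stmt_8 {V : Type*} [Fintype V] (G : SimpleGraph V)
    (hconn : G.Connected) (hcard : 2 < Fintype.card V) (h1wc : IsOneWellCovered G)
    (alpha : ℕ) (ha : alpha = indepNum G) :
    ∀ k : ℕ, k < (2 * alpha + 2) / 3 → indepCount G k ≤ indepCount G (k + 1) :=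
  stmt_8_general G hconn h1wc alpha ha
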